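/- arXiv:0807.1583 — 6 statements merged into one kernel-verified Lean document; each statement's English description precedes it below -/
import Mathlib

section
/- Let λ : G × G → Fˣ be a normalized 2-cocycle and H a normal subgroup of G contained in W = {w ∈ G : λ(g,w) = λ(w,g) = 1 for all g ∈ G}. If g₁ = u·h₁ and g₂ = u'·h₂ with h₁, h₂ ∈ H, then λ(g₁,g₂) = λ(u,u'). Consequently λ induces a well-defined 2-cocycle μ on G/H via μ(g₁H, g₂H) = λ(g₁,g₂). -/
/-- If `H` is a normal subgroup of `G` contained in
`W = {w : λ(g,w) = λ(w,g) = 1 ∀ g}`, then `λ(u h₁, u' h₂) = λ(u,u')` for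
`h₁, h₂ ∈ H`, so `λ` induces a well-defined 2-cocycle `μ` on `G/H` with
`μ(g₁H, g₂H) = λ(g₁,g₂)`. -/
theorem stmt_2 {G : Type*} [Group G] {F : Type*} [Field F] (l : G → G → Fˣ)
    (hcoc : ∀ a b c : G, l a (b * c) * l b c = l (a * b) c * l a b)
    (hnorm : ∀ g : G, l g 1 = 1 ∧ l 1 g = 1)
    (H : Subgroup G) [H.Normal]
    (hW : ∀ h ∈ H, ∀ g : G, l g h = 1 ∧ l h g = 1) :
    (∀ u u' h₁ h₂ : G, h₁ ∈ H → h₂ ∈ H → l (u * h₁) (u' * h₂) = l u u') ∧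
    ∃ μ : G ⧸ H → G ⧸ H → Fˣ,
      (∀ g₁ g₂ : G, μ (g₁ : G ⧸ H) (g₂ : G ⧸ H) = l g₁ g₂) ∧
      (∀ a b c : G ⧸ H, μ a (b * c) * μ b c = μ (a * b) c * μ a b) := by
  have key1 : ∀ a b h : G, h ∈ H → l a (b * h) = l a b := by
    intro a b h hh
    have := hcoc a b h
    rw [(hW h hh b).1, (hW h hh (a * b)).1, mul_one, one_mul] at this
    exact this
  have key2 : ∀ a b h : G, h ∈ H → l (a * h) b = l a b := by
    intro a b h hh
    have := hcoc a h b
    rw [(hW h hh b).2, (hW h hh a).1] at this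
    simp only [mul_one, one_mul] at this
    have hb : h * b = b * (b⁻¹ * h * b) := by group
    rw [← this, hb, key1 a b _ (Subgroup.Normal.conj_mem' ‹H.Normal› h hh b)]
  have key : ∀ u u' h₁ h₂ : G, h₁ ∈ H → h₂ ∈ H → l (u * h₁) (u' * h₂) = l u u' := by
    intro u u' h₁ h₂ hh₁ hh₂
    rw [key2 u (u' * h₂) h₁ hh₁, key1 u u' h₂ hh₂]
  refine ⟨key, ⟨fun a b => l a.out b.out, ?_, ?_⟩⟩
  · intro g₁ g₂
    dsimp only
    obtain ⟨h₁, e₁⟩ := QuotientGroup.mk_out_eq_mul H g₁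
    obtain ⟨h₂, e₂⟩ := QuotientGroup.mk_out_eq_mul H g₂
    rw [e₁, e₂, key g₁ g₂ h₁ h₂ h₁.2 h₂.2]
  · intro a b c
    obtain ⟨x, rfl⟩ := QuotientGroup.mk_surjective a
    obtain ⟨y, rfl⟩ := QuotientGroup.mk_surjective b
    obtain ⟨z, rfl⟩ := QuotientGroup.mk_surjective c
    have e : ∀ g₁ g₂ : G, l ((g₁ : G ⧸ H)).out ((g₂ : G ⧸ H)).out = l g₁ g₂ := by
      intro g₁ g₂
      obtain ⟨h₁, e₁⟩ := QuotientGroup.mk_out_eq_mul H g₁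
      obtain ⟨h₂, e₂⟩ := QuotientGroup.mk_out_eq_mul H g₂
      rw [e₁, e₂, key g₁ g₂ h₁ h₂ h₁.2 h₂.2]
    dsimp only
    rw [show ((y : G ⧸ H) * z) = ((y * z : G) : G ⧸ H) from rfl,
      show ((x : G ⧸ H) * y) = ((x * y : G) : G ⧸ H) from rfl, e, e, e, e]
    exact hcoc x y z
end

section
/- Let F^λ[G] be a twisted group algebra over a field F of characteristic p > 0 such that the commutator ideal [F^λ[G], F^λ[G]]·F^λ[G] is nil. If the basis element g̃ (for g ∈ G) is a p-element of the unit group, i.e. g̃^{p^t} = 1 for some t, then g itself has order p^t equal to the order of g̃, and the twist μ(g) = ∏_{i=1}^{k-1} λ(gⁱ, g) equals 1, where k is the order of g. -/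
/-!
Writing `k` for the order of `g`, the twisted multiplication gives `g̃ ^ k = μ(g) • 1`, and
comparing coefficients in the basis shows that `g̃ ^ n = 1` forces `g ^ n = 1`. Hence `k ∣ pᵗ`,
say `k = pˢ`, and `μ(g) ^ pᵗ⁻ˢ = 1`. Since Frobenius is injective on a field of characteristic
`p`, `μ(g) = 1`; then `g̃ ^ k = 1`, so also `pᵗ ∣ k`.
-/

/-- Additive subgroup generated by products `s * t` with `s ∈ S`, `t ∈ T`. -/
def aprod {R : Type*} [NonUnitalRing R] (S T : AddSubgroup R) : AddSubgroup R :=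
  AddSubgroup.closure {x : R | ∃ s ∈ S, ∃ t ∈ T, x = s * t}

/-- Additive subgroup generated by Lie commutators `s*t - t*s`. -/
def lbrk {R : Type*} [NonUnitalRing R] (S T : AddSubgroup R) : AddSubgroup R :=
  AddSubgroup.closure {x : R | ∃ s ∈ S, ∃ t ∈ T, x = s * t - t * s}

/-- The lower Lie central series `γ₁(R) = R`, `γₙ(R) = [γₙ₋₁(R), R]`. -/
def lieGamma (R : Type*) [NonUnitalRing R] : ℕ → AddSubgroup R
  | 0 => ⊤
  | 1 => ⊤
  | n + 2 => lbrk (lieGamma R (n + 1)) ⊤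

/-- The `n`-th lower Lie power `R^[n] = γₙ(R)·R`. -/
def lowerLiePow (R : Type*) [NonUnitalRing R] (n : ℕ) : AddSubgroup R :=
  aprod (lieGamma R n) ⊤

/-- The twist `μ(g) = ∏_{i=1}^{k-1} λ(gⁱ,g)` where `k` is the order of `g`. -/
noncomputable def twist {G : Type*} [Group G] {F : Type*} [Field F] (l : G → G → Fˣ) (g : G) : F :=
  ∏ i ∈ Finset.Icc 1 (orderOf g - 1), (l (g ^ i) g : F)

open Finset

section TwistedPow

variable {F G A : Type*} [CommSemiring F] [Monoid G] [Semiring A] [Algebra F A]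
  {l : G → G → Fˣ} {B : G → A}

theorem twisted_pow_succ (hmul : ∀ g h : G, B g * B h = (l g h : F) • B (g * h)) (g : G)
    (n : ℕ) : B g ^ (n + 1) = (∏ i ∈ Icc 1 n, (l (g ^ i) g : F)) • B (g ^ (n + 1)) := by
  induction n with
  | zero => simp
  | succ n ih =>
    rw [pow_succ, ih, smul_mul_assoc, hmul, prod_Icc_succ_top (by omega), smul_smul, ← pow_succ]

end TwistedPow

section TwistedGroupAlgebra

variable {F G A : Type*} [Field F] [Group G] [Ring A] [Algebra F A] {l : G → G → Fˣ}

theorem twisted_pow_orderOf {B : G → A} (hone : B 1 = 1)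
    (hmul : ∀ g h : G, B g * B h = (l g h : F) • B (g * h)) (g : G) :
    B g ^ orderOf g = algebraMap F A (twist l g) := by
  obtain hk | hk := (orderOf g).eq_zero_or_pos
  · simp [twist, hk]
  · obtain ⟨n, hn⟩ := Nat.exists_eq_add_one.mpr hk
    rw [hn, twisted_pow_succ hmul, ← hn, pow_orderOf_eq_one, hone, twist, hn,
      Nat.add_sub_cancel, Algebra.algebraMap_eq_smul_one]

theorem orderOf_dvd_orderOf_basis (B : Module.Basis G F A) (hone : B 1 = 1)
    (hmul : ∀ g h : G, B g * B h = (l g h : F) • B (g * h)) (g : G) :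
    orderOf g ∣ orderOf (B g) := by
  refine orderOf_dvd_of_pow_eq_one ?_
  obtain h0 | hpos := (orderOf (B g)).eq_zero_or_pos
  · rw [h0, pow_zero]
  · obtain ⟨n, hn⟩ := Nat.exists_eq_add_one.mpr hpos
    have h := pow_orderOf_eq_one (B g)
    rw [hn, twisted_pow_succ hmul, ← hone, ← one_smul F (B 1)] at h
    rw [hn]
    exact B.linearIndependent.eq_of_smul_apply_eq_smul_apply _ _ _ _
      (prod_ne_zero_iff.mpr fun i _ ↦ (l _ g).ne_zero) h

end TwistedGroupAlgebra

theorem stmt_8_general {F : Type*} [Field F] {G : Type*} [Group G]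
    {A : Type*} [Ring A] [Algebra F A]
    (l : G → G → Fˣ) (B : Module.Basis G F A)
    (hone : B 1 = 1)
    (hmul : ∀ g h : G, B g * B h = ((l g h : F)) • B (g * h))
    (p : ℕ) [Fact p.Prime] [CharP F p]
    (g : G) (t : ℕ) (hg : orderOf (B g) = p ^ t) :
    orderOf g = p ^ t ∧ twist l g = 1 := by
  have : Nontrivial A := ⟨⟨B 1, 0, B.ne_zero 1⟩⟩
  have hk : orderOf g ∣ p ^ t := hg ▸ orderOf_dvd_orderOf_basis B hone hmul g
  obtain ⟨s, hst, hks⟩ := (Nat.dvd_prime_pow Fact.out).mp hk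
  have hμ : twist l g = 1 := by
    have hpow : twist l g ^ p ^ (t - s) = 1 := (algebraMap F A).injective <| by
      rw [map_pow, ← twisted_pow_orderOf hone hmul, ← pow_mul, hks, ← pow_add,
        Nat.add_sub_cancel' hst, ← hg, pow_orderOf_eq_one, map_one]
    simpa using (ExpChar.pow_prime_pow_mul_eq_one_iff p (t - s) 1 _).mp (by rwa [mul_one])
  refine ⟨hk.antisymm (hg ▸ orderOf_dvd_of_pow_eq_one ?_), hμ⟩
  rw [twisted_pow_orderOf hone hmul, hμ, map_one]

/-- In a twisted group algebra of characteristic `p > 0` with nil commutator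
ideal `[A,A]·A`, if the basis element `g̃` has order `pᵗ` then `g` has the same
order `pᵗ` and its twist `μ(g)` equals `1`. -/
theorem stmt_8 {F : Type*} [Field F] {G : Type*} [Group G]
    {A : Type*} [Ring A] [Algebra F A]
    (l : G → G → Fˣ) (B : Module.Basis G F A)
    (hone : B 1 = 1)
    (hmul : ∀ g h : G, B g * B h = ((l g h : F)) • B (g * h))
    (hcoc : ∀ a b c : G, l a (b * c) * l b c = l (a * b) c * l a b)
    (hnorm : ∀ g : G, l g 1 = 1 ∧ l 1 g = 1)
    (p : ℕ) [Fact p.Prime] [CharP F p]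
    (hnil : ∀ x ∈ lowerLiePow A 2, IsNilpotent x)
    (g : G) (t : ℕ) (hg : orderOf (B g) = p ^ t) :
    orderOf g = p ^ t ∧ twist l g = 1 :=
  stmt_8_general l B hone hmul p g t hg
end

section
/- Let F^λ[G] be a twisted group algebra of characteristic p > 0 whose commutator ideal F^λ[G]^[2] is nil. If a, b ∈ G are untwisted p-elements (i.e. there exist γ₁, γ₂ ∈ F such that γ₁ã and γ₂b̃ have the same orders as a and b respectively), then ab is a p-element whose order p^l equals the order of γ₁γ₂ã b̃, and μ(ab) = (γ₁γ₂λ(a,b))^{−p^l}. -/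
section CommutatorIdeal

variable {A : Type*} [Ring A]

lemma commutator_mem_lowerLiePow_two (x y : A) : x * y - y * x ∈ lowerLiePow A 2 := by
  have hγ : x * y - y * x ∈ lieGamma A 2 :=
    AddSubgroup.subset_closure ⟨x, trivial, y, trivial, rfl⟩
  exact AddSubgroup.subset_closure ⟨_, hγ, 1, trivial, (mul_one _).symm⟩

lemma mul_mem_lowerLiePow_two_right {x : A} (hx : x ∈ lowerLiePow A 2) (r : A) :
    x * r ∈ lowerLiePow A 2 := by
  induction hx using AddSubgroup.closure_induction with
  | mem x hx =>
    obtain ⟨s, hs, t, -, rfl⟩ := hx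
    exact AddSubgroup.subset_closure ⟨s, hs, t * r, trivial, mul_assoc s t r⟩
  | zero => simpa only [zero_mul] using AddSubgroup.zero_mem _
  | add x y _ _ hx hy => simpa only [add_mul] using AddSubgroup.add_mem _ hx hy
  | neg x _ hx => simpa only [neg_mul] using AddSubgroup.neg_mem _ hx

lemma mul_mem_lowerLiePow_two_left {x : A} (hx : x ∈ lowerLiePow A 2) (r : A) :
    r * x ∈ lowerLiePow A 2 := by
  simpa using AddSubgroup.sub_mem _ (mul_mem_lowerLiePow_two_right hx r)
    (commutator_mem_lowerLiePow_two x r)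

variable (A) in
def lowerLiePowTwoIdeal : TwoSidedIdeal A :=
  .mk' (lowerLiePow A 2) (AddSubgroup.zero_mem _) (AddSubgroup.add_mem _) (AddSubgroup.neg_mem _)
    (fun hy => mul_mem_lowerLiePow_two_left hy _) (fun hx => mul_mem_lowerLiePow_two_right hx _)

lemma mul_pow_sub_pow_mul_pow_mem_lowerLiePow_two (u v : A) (n : ℕ) :
    (u * v) ^ n - u ^ n * v ^ n ∈ lowerLiePow A 2 := by
  let r := (lowerLiePowTwoIdeal A).ringCon
  have hcomm : Commute (r.mk' u) (r.mk' v) := by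
    rw [Commute, SemiconjBy, ← map_mul, ← map_mul]
    exact r.eq.mpr (commutator_mem_lowerLiePow_two u v)
  have hrel : r ((u * v) ^ n) (u ^ n * v ^ n) := by
    apply r.eq.mp
    change r.mk' _ = r.mk' _
    simp only [map_pow, map_mul, hcomm.mul_pow]
  simpa [r, lowerLiePowTwoIdeal, TwoSidedIdeal.rel_iff] using hrel

end CommutatorIdeal

lemma exists_pow_char_pow_eq_one_of_isNilpotent_sub_one {R : Type*} [Ring R] (p : ℕ) [Fact p.Prime]
    [CharP R p] {x : R} (hx : IsNilpotent (x - 1)) : ∃ m : ℕ, x ^ p ^ m = 1 := by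
  obtain ⟨m, hm⟩ := hx
  refine ⟨m, sub_eq_zero.mp ?_⟩
  rw [← one_pow (p ^ m), ← sub_pow_char_pow_of_commute _ _ (Commute.one_right x)]
  exact pow_eq_zero_of_le (Nat.lt_pow_self (Fact.out : p.Prime).one_lt).le hm

lemma exists_mul_pow_char_pow_eq_one {A : Type*} [Ring A] (p : ℕ) [Fact p.Prime] [CharP A p]
    (hnil : ∀ x ∈ lowerLiePow A 2, IsNilpotent x) {u v : A} {s t : ℕ}
    (hu : u ^ p ^ s = 1) (hv : v ^ p ^ t = 1) : ∃ N : ℕ, (u * v) ^ p ^ N = 1 := by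
  have hu' : u ^ p ^ (s + t) = 1 := by rw [pow_add, pow_mul, hu, one_pow]
  have hv' : v ^ p ^ (s + t) = 1 := by rw [pow_add, mul_comm, pow_mul, hv, one_pow]
  have hmem := mul_pow_sub_pow_mul_pow_mem_lowerLiePow_two u v (p ^ (s + t))
  rw [hu', hv', mul_one] at hmem
  obtain ⟨m, hm⟩ := exists_pow_char_pow_eq_one_of_isNilpotent_sub_one p (hnil _ hmem)
  exact ⟨s + t + m, by rw [pow_add, pow_mul, hm]⟩

lemma Module.Basis.eq_and_eq_of_smul_eq_smul {ι R M : Type*} [Semiring R] [AddCommMonoid M]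
    [Module R M] (B : Module.Basis ι R M) {α δ : R} {i j : ι} (h : α • B i = δ • B j)
    (hα : α ≠ 0) : i = j ∧ α = δ := by
  have := congrArg B.repr h
  simp only [map_smul, B.repr_self, Finsupp.smul_single, smul_eq_mul, mul_one] at this
  rcases (Finsupp.single_eq_single_iff _ _ _ _).1 this with h' | ⟨h0, -⟩
  · exact h'
  · exact absurd h0 hα

section TwistedGroupAlgebra

variable {F : Type*} [Field F] {G : Type*} [Group G] {A : Type*} [Ring A] [Algebra F A]
  {l : G → G → Fˣ} {B : Module.Basis G F A}

lemma basis_pow (hmul : ∀ g h : G, B g * B h = (l g h : F) • B (g * h)) (g : G) {n : ℕ}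
    (hn : 1 ≤ n) : B g ^ n = (∏ i ∈ Finset.Ico 1 n, (l (g ^ i) g : F)) • B (g ^ n) := by
  induction n, hn using Nat.le_induction with
  | base => simp
  | succ n hn ih =>
    rw [pow_succ, ih, smul_mul_assoc, hmul, Finset.prod_Ico_succ_top hn, smul_smul, ← pow_succ]

lemma smul_basis_pow (hmul : ∀ g h : G, B g * B h = (l g h : F) • B (g * h)) (β : F) (g : G)
    {n : ℕ} (hn : 1 ≤ n) :
    (β • B g) ^ n = (β ^ n * ∏ i ∈ Finset.Ico 1 n, (l (g ^ i) g : F)) • B (g ^ n) := by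
  rw [smul_pow, basis_pow hmul g hn, smul_smul]

lemma smul_basis_pow_orderOf (hone : B 1 = 1)
    (hmul : ∀ g h : G, B g * B h = (l g h : F) • B (g * h)) (β : F) {g : G}
    (hg : 0 < orderOf g) :
    (β • B g) ^ orderOf g = algebraMap F A (β ^ orderOf g * twist l g) := by
  rw [smul_basis_pow hmul β g hg, pow_orderOf_eq_one, hone, Algebra.algebraMap_eq_smul_one, twist,
    Finset.Icc_sub_one_right_eq_Ico_of_not_isMin (by simpa using hg.ne')]

theorem orderOf_eq_and_twist_eq_of_orderOf_smul_basis (hone : B 1 = 1)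
    (hmul : ∀ g h : G, B g * B h = (l g h : F) • B (g * h)) (p : ℕ) [hp : Fact p.Prime]
    [CharP F p] {β : F} {g : G} {k : ℕ} (hk : orderOf (β • B g) = p ^ k) :
    orderOf g = p ^ k ∧ twist l g = β⁻¹ ^ p ^ k := by
  have : Nontrivial A := nontrivial_of_ne _ _ (B.ne_zero 1)
  have hw : (β • B g) ^ p ^ k = 1 := hk ▸ pow_orderOf_eq_one _
  have hpk : 1 ≤ p ^ k := Nat.one_le_pow _ _ hp.out.pos
  have hβ : β ≠ 0 := by
    rintro rfl
    rw [zero_smul, zero_pow (by omega)] at hw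
    exact zero_ne_one hw
  have hg : g ^ p ^ k = 1 := by
    rw [smul_basis_pow hmul β g hpk, ← one_smul F (1 : A), ← hone] at hw
    refine (B.eq_and_eq_of_smul_eq_smul hw (mul_ne_zero (pow_ne_zero _ hβ) ?_)).1
    exact Finset.prod_ne_zero_iff.2 fun i _ => Units.ne_zero _
  obtain ⟨j, hjk, hj⟩ := (Nat.dvd_prime_pow hp.out).1 (orderOf_dvd_of_pow_eq_one hg)
  have hwj := smul_basis_pow_orderOf hone hmul β (g := g) (hj ▸ pow_pos hp.out.pos j)
  rw [hj] at hwj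
  have hα : β ^ p ^ j * twist l g = 1 := by
    apply iterateFrobenius_inj F p (k - j)
    apply (algebraMap F A).injective
    rw [iterateFrobenius_def, iterateFrobenius_def, map_pow, ← hwj, ← pow_mul, ← pow_add,
      Nat.add_sub_cancel' hjk, hw, one_pow, map_one]
  have hkj : k ≤ j := by
    rw [← Nat.pow_dvd_pow_iff_le_right hp.out.one_lt, ← hk]
    exact orderOf_dvd_of_pow_eq_one (by rw [hwj, hα, map_one])
  obtain rfl := le_antisymm hjk hkj
  exact ⟨hj, by rw [inv_pow, eq_inv_of_mul_eq_one_right hα]⟩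

end TwistedGroupAlgebra

theorem stmt_9_general {F : Type*} [Field F] {G : Type*} [Group G]
    {A : Type*} [Ring A] [Algebra F A]
    (l : G → G → Fˣ) (B : Module.Basis G F A)
    (hone : B 1 = 1)
    (hmul : ∀ g h : G, B g * B h = ((l g h : F)) • B (g * h))
    (p : ℕ) [Fact p.Prime] [CharP F p]
    (hnil : ∀ x ∈ lowerLiePow A 2, IsNilpotent x)
    (a b : G) (γ₁ γ₂ : F)
    (ha : ∃ s : ℕ, orderOf a = p ^ s) (hb : ∃ s : ℕ, orderOf b = p ^ s)
    (ha' : orderOf (γ₁ • B a) = orderOf a)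
    (hb' : orderOf (γ₂ • B b) = orderOf b) :
    ∃ k : ℕ, orderOf (a * b) = p ^ k ∧
      orderOf ((γ₁ * γ₂) • (B a * B b)) = p ^ k ∧
      twist l (a * b) = ((γ₁ * γ₂ * (l a b : F))⁻¹) ^ (p ^ k) := by
  have : Nontrivial A := nontrivial_of_ne _ _ (B.ne_zero 1)
  have : CharP A p := charP_of_injective_algebraMap (algebraMap F A).injective p
  obtain ⟨s, hs⟩ := ha
  obtain ⟨t, ht⟩ := hb
  have hu : (γ₁ • B a) ^ p ^ s = 1 := by rw [← hs, ← ha']; exact pow_orderOf_eq_one _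
  have hv : (γ₂ • B b) ^ p ^ t = 1 := by rw [← ht, ← hb']; exact pow_orderOf_eq_one _
  obtain ⟨N, hN⟩ := exists_mul_pow_char_pow_eq_one p hnil hu hv
  obtain ⟨k, -, hk⟩ := (Nat.dvd_prime_pow Fact.out).1 (orderOf_dvd_of_pow_eq_one hN)
  rw [smul_mul_smul_comm] at hk
  have huv : (γ₁ * γ₂) • (B a * B b) = (γ₁ * γ₂ * (l a b : F)) • B (a * b) := by
    rw [hmul, smul_smul]
  obtain ⟨hord, htwist⟩ :=
    orderOf_eq_and_twist_eq_of_orderOf_smul_basis hone hmul p (huv ▸ hk)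
  exact ⟨k, hord, hk, htwist⟩

/-- In a twisted group algebra of characteristic `p` with nil commutator ideal,
if `a, b` are untwisted `p`-elements (via scalars `γ₁, γ₂`), then `ab` is a
`p`-element whose order `pˡ` equals the order of `γ₁γ₂ã b̃`, and
`μ(ab) = (γ₁γ₂λ(a,b))^{-pˡ}`. -/
theorem stmt_9 {F : Type*} [Field F] {G : Type*} [Group G]
    {A : Type*} [Ring A] [Algebra F A]
    (l : G → G → Fˣ) (B : Module.Basis G F A)
    (hone : B 1 = 1)
    (hmul : ∀ g h : G, B g * B h = ((l g h : F)) • B (g * h))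
    (hcoc : ∀ a b c : G, l a (b * c) * l b c = l (a * b) c * l a b)
    (hnorm : ∀ g : G, l g 1 = 1 ∧ l 1 g = 1)
    (p : ℕ) [Fact p.Prime] [CharP F p]
    (hnil : ∀ x ∈ lowerLiePow A 2, IsNilpotent x)
    (a b : G) (γ₁ γ₂ : F)
    (ha : ∃ s : ℕ, orderOf a = p ^ s) (hb : ∃ s : ℕ, orderOf b = p ^ s)
    (ha' : orderOf (γ₁ • B a) = orderOf a)
    (hb' : orderOf (γ₂ • B b) = orderOf b) :
    ∃ k : ℕ, orderOf (a * b) = p ^ k ∧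
      orderOf ((γ₁ * γ₂) • (B a * B b)) = p ^ k ∧
      twist l (a * b) = ((γ₁ * γ₂ * (l a b : F))⁻¹) ^ (p ^ k) :=
  stmt_9_general l B hone hmul p hnil a b γ₁ γ₂ ha hb ha' hb'
end

section
/- Let F^λ[G] be a twisted group algebra of characteristic p > 0 such that either F^λ[G]^[m] = 0 (lower Lie nilpotent) or F^λ[G]^(m) = 0 (upper Lie nilpotent). If p^t ≥ m, then for every b ∈ G the element b^{p^t} is central in G, and moreover λ(a, b^{p^t}) = λ(b^{p^t}, a) for all a ∈ G. -/
/-- The `n`-th upper Lie power: `R^(1) = R`, `R^(n) = [R^(n-1), R]·R`. -/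
def upperLiePow (R : Type*) [NonUnitalRing R] : ℕ → AddSubgroup R
  | 0 => ⊤
  | 1 => ⊤
  | n + 2 => aprod (lbrk (upperLiePow R (n + 1)) ⊤) ⊤

/-!
In characteristic `p` the iterated commutator `[x, y, …, y]` with `pᵗ` copies of `y` equals
`[x, y^{pᵗ}]`, because `z ↦ z y - y z` is the difference of the commuting operators of right and
left multiplication by `y`. It lies in `γ_{pᵗ+1}(A)`, which vanishes once `A^[m]` or `A^(m)` does
and `m ≤ pᵗ`; so every `y^{pᵗ}` is central in `A`. For `y = b̃` we have `b̃^{pᵗ} = c · (b^{pᵗ})~` with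
`c ≠ 0`, and comparing `ã (b^{pᵗ})~ = λ(a, b^{pᵗ}) (a b^{pᵗ})~` with
`(b^{pᵗ})~ ã = λ(b^{pᵗ}, a) (b^{pᵗ} a)~` in the basis gives both claims.
-/

section LieSeries

variable {R : Type*}

lemma lbrk_mono_left [NonUnitalRing R] {S S' : AddSubgroup R} (T : AddSubgroup R) (h : S ≤ S') :
    lbrk S T ≤ lbrk S' T :=
  AddSubgroup.closure_mono fun _ ⟨s, hs, t, ht, hx⟩ => ⟨s, h hs, t, ht, hx⟩

lemma lieGamma_succ_le [NonUnitalRing R] : ∀ n, lieGamma R (n + 1) ≤ lieGamma R n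
  | 0 => le_top
  | 1 => le_top
  | n + 2 => lbrk_mono_left ⊤ (lieGamma_succ_le (n + 1))

lemma lieGamma_antitone [NonUnitalRing R] : Antitone (lieGamma R) :=
  antitone_nat_of_succ_le lieGamma_succ_le

lemma le_aprod_top [Ring R] (S : AddSubgroup R) : S ≤ aprod S ⊤ := fun s hs =>
  AddSubgroup.subset_closure ⟨s, hs, 1, trivial, (mul_one s).symm⟩

lemma lieGamma_le_upperLiePow [Ring R] : ∀ n, lieGamma R n ≤ upperLiePow R n
  | 0 => le_top
  | 1 => le_top
  | n + 2 => (lbrk_mono_left ⊤ (lieGamma_le_upperLiePow (n + 1))).trans (le_aprod_top _)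

lemma lieGamma_eq_bot_of_lowerLiePow_or_upperLiePow [Ring R] {m : ℕ}
    (h : lowerLiePow R m = ⊥ ∨ upperLiePow R m = ⊥) : lieGamma R m = ⊥ := by
  refine eq_bot_iff.mpr ?_
  rcases h with h | h
  · exact h ▸ le_aprod_top _
  · exact h ▸ lieGamma_le_upperLiePow m

lemma iterate_commutator_mem_lieGamma [NonUnitalRing R] (x y : R) :
    ∀ k, (fun z => z * y - y * z)^[k] x ∈ lieGamma R (k + 1)
  | 0 => AddSubgroup.mem_top x
  | k + 1 => by
    rw [Function.iterate_succ_apply']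
    exact AddSubgroup.subset_closure ⟨_, iterate_commutator_mem_lieGamma x y k, y, trivial, rfl⟩

theorem iterate_commutator_expChar_pow [Ring R] (p : ℕ) [ExpChar R p] (n : ℕ) (x y : R) :
    (fun z => z * y - y * z)^[p ^ n] x = x * y ^ p ^ n - y ^ p ^ n * x := by
  have : ExpChar (Module.End ℤ R) p :=
    expChar_of_injective_ringHom (f := (Algebra.lmul ℤ R).toRingHom) Algebra.lmul_injective p
  have hiter : (fun z => z * y - y * z) = ⇑(LinearMap.mulRight ℤ y - LinearMap.mulLeft ℤ y) := rfl
  rw [hiter, ← Module.End.coe_pow, sub_pow_expChar_pow_of_commute p n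
    (LinearMap.commute_mulLeft_right y y).symm, LinearMap.pow_mulLeft, LinearMap.pow_mulRight]
  rfl

theorem commute_pow_expChar_pow_of_lieGamma_eq_bot [Ring R] (p : ℕ) [ExpChar R p] (n : ℕ)
    (h : lieGamma R (p ^ n + 1) = ⊥) (x y : R) : Commute x (y ^ p ^ n) := by
  have hmem := iterate_commutator_mem_lieGamma x y (p ^ n)
  rw [h, iterate_commutator_expChar_pow, AddSubgroup.mem_bot, sub_eq_zero] at hmem
  exact hmem

end LieSeries

section TwistedGroupAlgebra

variable {F G A : Type*}

theorem Module.Basis.eq_and_eq_of_smul_eq_smul_s11 [Semiring F] [AddCommMonoid A] [Module F A]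
    (B : Module.Basis G F A) {g h : G} {c d : F} (hc : c ≠ 0) (he : c • B g = d • B h) :
    g = h ∧ c = d := by
  have hrepr := congrArg B.repr he
  simp only [map_smul, B.repr_self, Finsupp.smul_single, smul_eq_mul, mul_one] at hrepr
  rcases (Finsupp.single_eq_single_iff _ _ _ _).mp hrepr with hgcd | ⟨hc0, -⟩
  · exact hgcd
  · exact absurd hc0 hc

theorem exists_pow_succ_eq_smul [CommSemiring F] [Monoid G] [Semiring A] [Algebra F A]
    (l : G → G → Fˣ) (B : G → A) (hmul : ∀ g h : G, B g * B h = (l g h : F) • B (g * h))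
    (b : G) : ∀ n : ℕ, ∃ c : Fˣ, B b ^ (n + 1) = (c : F) • B (b ^ (n + 1))
  | 0 => ⟨1, by simp⟩
  | n + 1 => by
    obtain ⟨c, hc⟩ := exists_pow_succ_eq_smul l B hmul b n
    refine ⟨c * l (b ^ (n + 1)) b, ?_⟩
    rw [pow_succ, hc, smul_mul_assoc, hmul, smul_smul, ← pow_succ, Units.val_mul]

theorem mul_comm_and_twist_symm_of_commute [CommSemiring F] [Nontrivial F] [Monoid G]
    [Semiring A] [Algebra F A] (l : G → G → Fˣ) (B : Module.Basis G F A)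
    (hmul : ∀ g h : G, B g * B h = (l g h : F) • B (g * h)) {g h : G}
    (hgh : Commute (B g) (B h)) : g * h = h * g ∧ l g h = l h g := by
  have he := hgh.eq
  rw [hmul, hmul] at he
  obtain ⟨hprod, hl⟩ := B.eq_and_eq_of_smul_eq_smul_s11 (Units.ne_zero _) he
  exact ⟨hprod, Units.ext hl⟩

end TwistedGroupAlgebra

theorem stmt_11_general {F : Type*} [Field F] {G : Type*} [Group G]
    {A : Type*} [Ring A] [Algebra F A]
    (l : G → G → Fˣ) (B : Module.Basis G F A)
    (hmul : ∀ g h : G, B g * B h = ((l g h : F)) • B (g * h))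
    (p : ℕ) [Fact p.Prime] [CharP F p]
    (m t : ℕ) (hLie : lowerLiePow A m = ⊥ ∨ upperLiePow A m = ⊥)
    (hmt : m ≤ p ^ t) :
    ∀ b : G, (∀ a : G, a * b ^ p ^ t = b ^ p ^ t * a) ∧
      (∀ a : G, l a (b ^ p ^ t) = l (b ^ p ^ t) a) := by
  have : Nontrivial A := nontrivial_of_ne _ _ (B.ne_zero 1)
  have : CharP A p := charP_of_injective_algebraMap (algebraMap F A).injective p
  have hgamma : lieGamma A (p ^ t + 1) = ⊥ := eq_bot_iff.mpr <|
    (lieGamma_antitone (by omega)).trans (lieGamma_eq_bot_of_lowerLiePow_or_upperLiePow hLie).le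
  intro b
  obtain ⟨k, hk⟩ := Nat.exists_eq_add_one_of_ne_zero (pow_ne_zero t (Fact.out : p.Prime).ne_zero)
  obtain ⟨c, hc⟩ := exists_pow_succ_eq_smul l B hmul b k
  rw [← hk] at hc
  have hcomm (a : G) : Commute (B a) (B (b ^ p ^ t)) := by
    have := commute_pow_expChar_pow_of_lieGamma_eq_bot p t hgamma (B a) (B b)
    rwa [hc, Commute.smul_right_iff₀ (Units.ne_zero c)] at this
  exact ⟨fun a => (mul_comm_and_twist_symm_of_commute l B hmul (hcomm a)).1,
    fun a => (mul_comm_and_twist_symm_of_commute l B hmul (hcomm a)).2⟩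

/-- If a twisted group algebra of characteristic `p` satisfies `A^[m] = 0` or
`A^(m) = 0` and `pᵗ ≥ m`, then `b^{pᵗ}` is central in `G` for every `b`, and
`λ(a, b^{pᵗ}) = λ(b^{pᵗ}, a)` for all `a`. -/
theorem stmt_11 {F : Type*} [Field F] {G : Type*} [Group G]
    {A : Type*} [Ring A] [Algebra F A]
    (l : G → G → Fˣ) (B : Module.Basis G F A)
    (hone : B 1 = 1)
    (hmul : ∀ g h : G, B g * B h = ((l g h : F)) • B (g * h))
    (hcoc : ∀ a b c : G, l a (b * c) * l b c = l (a * b) c * l a b)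
    (hnorm : ∀ g : G, l g 1 = 1 ∧ l 1 g = 1)
    (p : ℕ) [Fact p.Prime] [CharP F p]
    (m t : ℕ) (hLie : lowerLiePow A m = ⊥ ∨ upperLiePow A m = ⊥)
    (hmt : m ≤ p ^ t) :
    ∀ b : G, (∀ a : G, a * b ^ p ^ t = b ^ p ^ t * a) ∧
      (∀ a : G, l a (b ^ p ^ t) = l (b ^ p ^ t) a) :=
  stmt_11_general l B hmul p m t hLie hmt
end

section
/- Let F⟨x,y⟩ be the free associative algebra over a field F of characteristic p > 0, let m = p^l·r with gcd(p,r) = 1, and let p^t ≥ n. Then the (n,m)-Engel identity implies the (p^{l+t}, r)-Engel identity: in any F-algebra satisfying [a, b^m, …, b^m] = 0 (b^m repeated n times) for all a, b, one also has [a, b^r, …, b^r] = 0 (b^r repeated p^{l+t} times) for all a, b. -/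
/-!
In characteristic `p` the operator `ad y = R_y - L_y` is a difference of commuting operators, so
`(ad y)^(pˢ) = R_{y^(pˢ)} - L_{y^(pˢ)} = ad (y^(pˢ))`. Hence `p^(l+t)` commutators with `b^r`
are `pᵗ` commutators with `(b^r)^(pˡ) = b^m`, and these vanish because already `n ≤ pᵗ` of them do.
-/

/-- The left-normed iterated Lie commutator `[x, y, …, y]` (`n` copies of `y`). -/
def itLie {R : Type*} [Ring R] (x y : R) : ℕ → R
  | 0 => x
  | n + 1 => itLie x y n * y - y * itLie x y n

section itLie

variable {R : Type*} [Ring R]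

@[simp]
lemma itLie_zero_left (y : R) (k : ℕ) : itLie 0 y k = 0 := by
  induction k with
  | zero => rfl
  | succ k ih => simp [itLie, ih]

lemma itLie_add (x y : R) (a k : ℕ) : itLie x y (a + k) = itLie (itLie x y a) y k := by
  induction k with
  | zero => rfl
  | succ k ih => rw [← Nat.add_assoc]; simp only [itLie, ih]

lemma itLie_eq_zero_of_le {x y : R} {n k : ℕ} (h : itLie x y n = 0) (hnk : n ≤ k) :
    itLie x y k = 0 := by
  rw [← Nat.add_sub_cancel' hnk, itLie_add, h, itLie_zero_left]

lemma itLie_eq_pow_apply (F : Type*) [CommRing F] [Algebra F R] (x y : R) (k : ℕ) :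
    itLie x y k = ((LinearMap.mulRight F y - LinearMap.mulLeft F y) ^ k) x := by
  induction k with
  | zero => rfl
  | succ k ih =>
    rw [pow_succ']
    simp [itLie, ih, Module.End.mul_apply]

lemma itLie_expChar_pow_mul (F : Type*) [Field F] (p : ℕ) [ExpChar F p] [Algebra F R]
    (x y : R) (s k : ℕ) : itLie x y (p ^ s * k) = itLie x (y ^ p ^ s) k := by
  cases subsingleton_or_nontrivial R
  · exact Subsingleton.elim _ _
  have : ExpChar (Module.End F R) p := expChar_of_injective_algebraMap (algebraMap F _).injective p
  rw [itLie_eq_pow_apply F, itLie_eq_pow_apply F, pow_mul,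
    sub_pow_expChar_pow_of_commute p s (LinearMap.commute_mulLeft_right y y).symm,
    LinearMap.pow_mulRight, LinearMap.pow_mulLeft]

end itLie

theorem stmt_14_general {F : Type*} [Field F] (p : ℕ) [Fact p.Prime] [CharP F p]
    (n m l r t : ℕ) (hm : m = p ^ l * r)
    (ht : n ≤ p ^ t)
    (R : Type*) [Ring R] [Algebra F R]
    (hEngel : ∀ a b : R, itLie a (b ^ m) n = 0) :
    ∀ a b : R, itLie a (b ^ r) (p ^ (l + t)) = 0 := by
  intro a b
  have h : itLie a (b ^ r) (p ^ (l + t)) = itLie a (b ^ m) (p ^ t) := by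
    rw [pow_add, itLie_expChar_pow_mul F p, ← pow_mul, mul_comm r, hm]
  exact h ▸ itLie_eq_zero_of_le (hEngel a b) ht

/-- Over a field of characteristic `p > 0`, with `m = pˡ·r`, `gcd(p,r) = 1`
and `pᵗ ≥ n`: any associative `F`-algebra satisfying the `(n,m)`-Engel identity
also satisfies the `(p^{l+t}, r)`-Engel identity. -/
theorem stmt_14 {F : Type*} [Field F] (p : ℕ) [Fact p.Prime] [CharP F p]
    (n m l r t : ℕ) (hn : 0 < n) (hm : m = p ^ l * r) (hr : Nat.Coprime p r)
    (ht : n ≤ p ^ t)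
    (R : Type*) [Ring R] [Algebra F R]
    (hEngel : ∀ a b : R, itLie a (b ^ m) n = 0) :
    ∀ a b : R, itLie a (b ^ r) (p ^ (l + t)) = 0 :=
  stmt_14_general (F := F) p n m l r t hm ht R hEngel
end

section
/- Let F^λ[G] be a twisted group algebra of characteristic p > 0 with F^λ[G]^[2] nil, and suppose a, b ∈ G. Then the group commutator (a,b) is a p-element of G: there exists m such that (a,b)^{p^m} = 1. -/
lemma sub_mul_mem_lowerLiePow_two {R : Type*} [Ring R] (s t u : R) :
    (s * t - t * s) * u ∈ lowerLiePow R 2 :=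
  AddSubgroup.subset_closure
    ⟨s * t - t * s, AddSubgroup.subset_closure ⟨s, trivial, t, trivial, rfl⟩, u, trivial, rfl⟩

lemma exists_pow_char_pow_eq_of_isNilpotent_sub {R : Type*} [Ring R] (p : ℕ) [Fact p.Prime]
    [CharP R p] {x y : R} (hxy : Commute x y) (h : IsNilpotent (x - y)) :
    ∃ n : ℕ, x ^ p ^ n = y ^ p ^ n := by
  obtain ⟨n, hn⟩ := h
  refine ⟨n, ?_⟩
  have hle : n ≤ p ^ n := (Nat.lt_pow_self (Fact.out : p.Prime).one_lt).le
  rw [← sub_eq_zero, ← sub_pow_char_pow_of_commute p n hxy, pow_eq_zero_of_le hle hn]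

lemma Module.Basis.eq_of_smul_eq_smul {ι R M : Type*} [Semiring R] [AddCommMonoid M] [Module R M]
    (b : Module.Basis ι R M) {i j : ι} {c d : R} (hc : c ≠ 0) (h : c • b i = d • b j) :
    i = j := by
  have hrepr := congrArg b.repr h
  simp only [map_smul, b.repr_self, Finsupp.smul_single, smul_eq_mul, mul_one] at hrepr
  rcases (Finsupp.single_eq_single_iff _ _ _ _).mp hrepr with ⟨hij, -⟩ | ⟨hc0, -⟩
  · exact hij
  · exact absurd hc0 hc

section TwistedGroupAlgebra

variable {F G A : Type*} [Field F] [Group G] [Ring A] [Algebra F A]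
  {l : G → G → Fˣ} {B : Module.Basis G F A}

lemma exists_basis_mul_basis_mul_basis (hmul : ∀ g h : G, B g * B h = (l g h : F) • B (g * h))
    (g h k : G) : ∃ c : Fˣ, B g * B h * B k = (c : F) • B (g * h * k) :=
  ⟨l g h * l (g * h) k, by rw [hmul, smul_mul_assoc, hmul, smul_smul, Units.val_mul]⟩

lemma exists_basis_pow (hone : B 1 = 1) (hmul : ∀ g h : G, B g * B h = (l g h : F) • B (g * h))
    (g : G) (n : ℕ) : ∃ u : Fˣ, B g ^ n = (u : F) • B (g ^ n) := by
  induction n with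
  | zero => exact ⟨1, by rw [pow_zero, pow_zero, hone, Units.val_one, one_smul]⟩
  | succ n ih =>
    obtain ⟨u, hu⟩ := ih
    exact ⟨u * l (g ^ n) g, by
      rw [pow_succ, hu, smul_mul_assoc, hmul, smul_smul, pow_succ, Units.val_mul]⟩

lemma exists_pow_char_pow_eq_one_of_isNilpotent (hone : B 1 = 1)
    (hmul : ∀ g h : G, B g * B h = (l g h : F) • B (g * h)) (p : ℕ) [Fact p.Prime] [CharP F p]
    {g : G} (c d : Fˣ) (h : IsNilpotent ((c : F) • B g - algebraMap F A d)) :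
    ∃ n : ℕ, g ^ p ^ n = 1 := by
  have : Nontrivial A := nontrivial_of_ne (B 1) 0 (B.ne_zero 1)
  have : CharP A p := charP_of_injective_algebraMap (algebraMap F A).injective p
  obtain ⟨n, hn⟩ := exists_pow_char_pow_eq_of_isNilpotent_sub p (Algebra.commutes _ _).symm h
  obtain ⟨u, hu⟩ := exists_basis_pow hone hmul g (p ^ n)
  refine ⟨n, B.eq_of_smul_eq_smul (c := (c : F) ^ p ^ n * u) (d := (d : F) ^ p ^ n) ?_ ?_⟩
  · exact mul_ne_zero (pow_ne_zero _ c.ne_zero) u.ne_zero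
  · rw [← smul_smul, ← hu, ← smul_pow, hn, ← map_pow, Algebra.algebraMap_eq_smul_one, hone]

end TwistedGroupAlgebra

theorem stmt_16_general {F : Type*} [Field F] {G : Type*} [Group G]
    {A : Type*} [Ring A] [Algebra F A]
    (l : G → G → Fˣ) (B : Module.Basis G F A)
    (hone : B 1 = 1)
    (hmul : ∀ g h : G, B g * B h = ((l g h : F)) • B (g * h))
    (p : ℕ) [Fact p.Prime] [CharP F p]
    (hnil : ∀ x ∈ lowerLiePow A 2, IsNilpotent x) :
    ∀ a b : G, ∃ m : ℕ, (a⁻¹ * b⁻¹ * a * b) ^ p ^ m = 1 := by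
  intro a b
  obtain ⟨c, hc⟩ := exists_basis_mul_basis_mul_basis hmul a⁻¹ b⁻¹ (a * b)
  obtain ⟨d, hd⟩ := exists_basis_mul_basis_mul_basis hmul b⁻¹ a⁻¹ (a * b)
  have hx := hnil _ (sub_mul_mem_lowerLiePow_two (B a⁻¹) (B b⁻¹) (B (a * b)))
  rw [sub_mul, hc, hd, show b⁻¹ * a⁻¹ * (a * b) = 1 by group, hone,
    ← Algebra.algebraMap_eq_smul_one, show a⁻¹ * b⁻¹ * (a * b) = a⁻¹ * b⁻¹ * a * b by group] at hx
  exact exists_pow_char_pow_eq_one_of_isNilpotent hone hmul p c d hx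

/-- In a twisted group algebra of characteristic `p > 0` with nil commutator
ideal, every group commutator `(a,b) = a⁻¹b⁻¹ab` is a `p`-element of `G`. -/
theorem stmt_16 {F : Type*} [Field F] {G : Type*} [Group G]
    {A : Type*} [Ring A] [Algebra F A]
    (l : G → G → Fˣ) (B : Module.Basis G F A)
    (hone : B 1 = 1)
    (hmul : ∀ g h : G, B g * B h = ((l g h : F)) • B (g * h))
    (hcoc : ∀ a b c : G, l a (b * c) * l b c = l (a * b) c * l a b)
    (hnorm : ∀ g : G, l g 1 = 1 ∧ l 1 g = 1)
    (p : ℕ) [Fact p.Prime] [CharP F p]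
    (hnil : ∀ x ∈ lowerLiePow A 2, IsNilpotent x) :
    ∀ a b : G, ∃ m : ℕ, (a⁻¹ * b⁻¹ * a * b) ^ p ^ m = 1 :=
  stmt_16_general l B hone hmul p hnil
end
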